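/- arXiv:math/0207264 — 2 statements merged into one kernel-verified Lean document; each statement's English description precedes it below -/
import Mathlib

section
/- Let A be a ring whose underlying additive group is torsion-free, and let (e_a)_{a ∈ S} be a finite family of pairwise orthogonal idempotents in A (e_a · e_b = 0 for a ≠ b, e_a · e_a = e_a) with ∑_{a ∈ S} e_a = 1. Assume that for every pair a, b ∈ S there exists a nonzero element x ∈ A with e_a · x · e_b = x. Then any central element z of A of the form z = ∑_{a ∈ S} v_a • e_a with integer coefficients v_a ∈ ℤ satisfies v_a = v_b for all a, b ∈ S; consequently z = m • 1 for some integer m. -/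
open Finset

/-- Let `A` be a ring whose additive group is torsion-free, and let `(e a)` be a
finite complete family of pairwise orthogonal idempotents such that for all `a, b`
there is a nonzero `x` with `e a * x * e b = x`.  Then any central element of the
form `z = ∑ a, v a • e a` with integer coefficients has all coefficients equal,
and hence `z = m • 1` for some integer `m`. -/
theorem central_combination_of_idempotents_is_integer
    (A : Type*) [Ring A]
    (htf : ∀ (n : ℤ) (x : A), n ≠ 0 → n • x = 0 → x = 0)
    (S : Type*) [Fintype S] (e : S → A)
    (hidem : ∀ a, e a * e a = e a)
    (horth : ∀ a b, a ≠ b → e a * e b = 0)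
    (hsum : ∑ a, e a = 1)
    (hconn : ∀ a b, ∃ x : A, x ≠ 0 ∧ e a * x * e b = x)
    (v : S → ℤ) (z : A)
    (hz : z = ∑ a, v a • e a)
    (hcentral : ∀ y : A, z * y = y * z) :
    (∀ a b, v a = v b) ∧ ∃ m : ℤ, z = m • (1 : A) := by
  have key : ∀ a b, v a = v b := by
    intro a b
    obtain ⟨x, hx, hex⟩ := hconn a b
    have hze : z * e a = v a • e a := by
      rw [hz, Finset.sum_mul]
      rw [Finset.sum_eq_single a]
      · rw [smul_mul_assoc, hidem]
      · intro c _ hc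
        rw [smul_mul_assoc, horth c a hc, smul_zero]
      · intro h; exact absurd (Finset.mem_univ a) h
    have hez : e b * z = v b • e b := by
      rw [hz, Finset.mul_sum]
      rw [Finset.sum_eq_single b]
      · rw [mul_smul_comm, hidem]
      · intro c _ hc
        rw [mul_smul_comm, horth b c hc.symm, smul_zero]
      · intro h; exact absurd (Finset.mem_univ b) h
    have h1 : z * x = v a • x := by
      conv_lhs => rw [← hex]
      rw [← mul_assoc, ← mul_assoc, hze, smul_mul_assoc, smul_mul_assoc, hex]
    have h2 : x * z = v b • x := by
      conv_lhs => rw [← hex]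
      rw [mul_assoc, hez, mul_smul_comm, hex]
    have h3 : (v a - v b) • x = 0 := by
      rw [sub_smul, ← h1, ← h2, hcentral x, sub_self]
    by_contra hne
    exact hx (htf (v a - v b) x (sub_ne_zero.mpr hne) h3)
  refine ⟨key, ?_⟩
  cases isEmpty_or_nonempty S with
  | inl h =>
    refine ⟨0, ?_⟩
    rw [hz, Finset.univ_eq_empty, Finset.sum_empty, zero_smul]
  | inr h =>
    obtain ⟨a0⟩ := h
    refine ⟨v a0, ?_⟩
    rw [hz, ← hsum, Finset.smul_sum]
    exact Finset.sum_congr rfl fun c _ => by rw [key c a0]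
end

section
/- Let C be a preadditive monoidal category whose tensor product is additive in each variable, and suppose the endomorphism ring End(𝟙_C) of the monoidal unit is isomorphic as a ring to ℤ. Let M and N be objects of C with M invertible (there exists P with isomorphisms P ⊗ M ≅ 𝟙_C and M ⊗ P ≅ 𝟙_C), and let f : M → N be an isomorphism. Then every isomorphism g : M → N satisfies g = f or g = −f; in particular −f is the only isomorphism from M to N other than f. -/
open CategoryTheory MonoidalCategory

/-- Let `C` be a preadditive monoidal category whose tensor product is additive in
each variable, and suppose the endomorphism ring of the monoidal unit is isomorphic
to `ℤ`.  If `M` is invertible and `f : M ≅ N` is an isomorphism, then every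
isomorphism `g : M ≅ N` satisfies `g = f` or `g = -f`. -/
theorem iso_eq_pm_of_invertible
    (C : Type*) [Category C] [Preadditive C] [MonoidalCategory C]
    [MonoidalPreadditive C]
    (hunit : Nonempty (End (𝟙_ C) ≃+* ℤ))
    (M N : C)
    (hM : ∃ P : C, Nonempty (P ⊗ M ≅ 𝟙_ C) ∧ Nonempty (M ⊗ P ≅ 𝟙_ C))
    (f : M ≅ N) :
    ∀ g : M ≅ N, g.hom = f.hom ∨ g.hom = -f.hom := by
  intro g
  obtain ⟨P, ⟨e⟩, ⟨e'⟩⟩ := hM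
  obtain ⟨ρ⟩ := hunit
  -- the automorphism of M
  set u : M ⟶ M := g.hom ≫ f.inv with hu
  -- the transport map to End(𝟙)
  set φ : (M ⟶ M) → End (𝟙_ C) := fun v => e.inv ≫ (P ◁ v) ≫ e.hom with hφ
  -- φ is injective
  have hinj : Function.Injective φ := by
    intro v w h
    have h1 : P ◁ v = P ◁ w := by
      have := congrArg (fun t => e.hom ≫ t ≫ e.inv) h
      simpa [hφ] using this
    have h2 : M ◁ (P ◁ v) = M ◁ (P ◁ w) := by rw [h1]
    have h3 : (M ⊗ P) ◁ v = (M ⊗ P) ◁ w := by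
      rw [tensor_whiskerLeft, tensor_whiskerLeft, h2]
    have h := congrArg (fun t => (e'.inv ▷ M) ≫ t ≫ (e'.hom ▷ M)) h3
    rw [whisker_exchange, whisker_exchange] at h
    simpa using h
  -- φ respects composition and identities
  have hφcomp : ∀ v w : M ⟶ M, φ (v ≫ w) = φ v ≫ φ w := by
    intro v w; simp [hφ]
  have hφid : φ (𝟙 M) = 𝟙 (𝟙_ C) := by simp [hφ]
  have hφneg : φ (-(𝟙 M)) = -(𝟙 (𝟙_ C)) := by
    have : P ◁ (-(𝟙 M)) = -(P ◁ (𝟙 M)) := by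
      apply eq_neg_of_add_eq_zero_left
      rw [← MonoidalPreadditive.whiskerLeft_add]
      simp
    simp [hφ, this, Preadditive.comp_neg, Preadditive.neg_comp]
  -- u is invertible, so φ u is a unit of End(𝟙) ≅ ℤ
  have huinv1 : u ≫ (f.hom ≫ g.inv) = 𝟙 M := by simp [hu]
  have huinv2 : (f.hom ≫ g.inv) ≫ u = 𝟙 M := by simp [hu]
  have hunit' : IsUnit (ρ (φ u)) := by
    refine isUnit_iff_exists.mpr ⟨ρ (φ (f.hom ≫ g.inv)), ?_, ?_⟩
    · rw [← map_mul]
      have : (φ u : End (𝟙_ C)) * φ (f.hom ≫ g.inv) = φ (f.hom ≫ g.inv) ≫ φ u := rfl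
      rw [this, ← hφcomp, huinv2, hφid]
      exact map_one ρ
    · rw [← map_mul]
      have : (φ (f.hom ≫ g.inv) : End (𝟙_ C)) * φ u = φ u ≫ φ (f.hom ≫ g.inv) := rfl
      rw [this, ← hφcomp, huinv1, hφid]
      exact map_one ρ
  rcases Int.isUnit_iff.mp hunit' with h1 | h1
  · left
    have : φ u = φ (𝟙 M) := by
      apply ρ.injective
      rw [hφid]
      have : ρ (𝟙 (𝟙_ C) : End (𝟙_ C)) = ρ (1 : End (𝟙_ C)) := rfl
      rw [this, map_one, h1]
    have hu1 : u = 𝟙 M := hinj this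
    calc g.hom = (g.hom ≫ f.inv) ≫ f.hom := by simp
    _ = f.hom := by rw [← hu, hu1]; simp
  · right
    have : φ u = φ (-(𝟙 M)) := by
      apply ρ.injective
      rw [hφneg]
      have hneg : ρ (-(𝟙 (𝟙_ C)) : End (𝟙_ C)) = -ρ (1 : End (𝟙_ C)) := by
        rw [← map_neg]; rfl
      rw [hneg, map_one, h1]
    have hu1 : u = -(𝟙 M) := hinj this
    calc g.hom = (g.hom ≫ f.inv) ≫ f.hom := by simp
    _ = -f.hom := by
        rw [← hu, hu1, Preadditive.neg_comp]; simp
end
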